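/- The set of zeros of H(x) = h(x₁²,…,x₅²) on the unit sphere S⁴ ⊂ ℝ⁵ is exactly the union of the ten circles S₁^± ∪ ⋯ ∪ S₅^±, where S₁^± = {(±1/√2, a, 0, 0, b) : a² + b² = 1/2} and S₂^±,…,S₅^± are its cyclic shifts (e.g. S₂^± = {(b, ±1/√2, a, 0, 0) : a² + b² = 1/2}). -/

import Mathlib

/-- Membership in the union of the ten circles `S₁^± ∪ ⋯ ∪ S₅^±` in `S⁴ ⊂ ℝ⁵`:
`S₁^± = {(±1/√2, a, 0, 0, b) : a² + b² = 1/2}` and its cyclic shifts. -/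
def inTenCircles (x : Fin 5 → ℝ) : Prop :=
  ∃ j : Fin 5, ∃ ε : ℝ, (ε = 1 ∨ ε = -1) ∧ x j = ε / Real.sqrt 2 ∧
    x (j + 2) = 0 ∧ x (j + 3) = 0 ∧ (x (j + 1)) ^ 2 + (x (j + 4)) ^ 2 = 1 / 2

/-!
On the nonnegative orthant the Horn form `h` vanishes exactly on the five cones
`y_{j+2} = y_{j+3} = 0, y_j = y_{j+1} + y_{j-1}`. Since `h` is invariant under cyclic shifts, it
suffices to treat a zero whose first coordinate is minimal, and there the two decompositions
`h = (a-b+c-d+e)² + 4ad + 4e(b-a) = (a+b-c+d-e)² + 4ac + 4b(e-a)` into nonnegative terms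
force `a = 0`, `c + e = b + d` and `be = 0`. Substituting `y = x²` on the sphere turns these cones
into the ten circles.
-/

section Horn

variable {R : Type*} [CommRing R]

def hornForm (y : Fin 5 → R) : R :=
  (∑ i, y i) ^ 2 - 4 * ∑ i, y i * y (i + 1)

def hornZeroCone (j : Fin 5) : Set (Fin 5 → R) :=
  {y | y (j + 2) = 0 ∧ y (j + 3) = 0 ∧ y j = y (j + 1) + y (j + 4)}

theorem hornForm_eq (y : Fin 5 → R) :
    hornForm y = (∑ i, y i) ^ 2
      - 4 * (y 0 * y 1 + y 1 * y 2 + y 2 * y 3 + y 3 * y 4 + y 4 * y 0) := by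
  rw [hornForm, Fin.sum_univ_five (fun i ↦ y i * y (i + 1))]
  rfl

theorem hornForm_comp_add_right (y : Fin 5 → R) (j : Fin 5) :
    hornForm (fun i ↦ y (i + j)) = hornForm y := by
  simp only [hornForm, add_right_comm _ (1 : Fin 5) j]
  rw [show ∑ i, y (i + j) = ∑ i, y i from Equiv.sum_comp (Equiv.addRight j) y,
    show ∑ i, y (i + j) * y (i + j + 1) = ∑ i, y i * y (i + 1) from
      Equiv.sum_comp (Equiv.addRight j) fun i ↦ y i * y (i + 1)]

theorem comp_add_right_mem_hornZeroCone_iff {y : Fin 5 → R} {j k : Fin 5} :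
    (fun i ↦ y (i + j)) ∈ hornZeroCone k ↔ y ∈ hornZeroCone (k + j) := by
  simp only [hornZeroCone, Set.mem_ofPred_eq, add_right_comm _ j]

theorem hornForm_eq_zero_of_mem_hornZeroCone {y : Fin 5 → R} {j : Fin 5}
    (hy : y ∈ hornZeroCone j) : hornForm y = 0 := by
  set z : Fin 5 → R := fun i ↦ y (i + j)
  have hz : z ∈ hornZeroCone 0 := comp_add_right_mem_hornZeroCone_iff.2 (by rwa [zero_add])
  obtain ⟨h₂, h₃, h₀⟩ : z 2 = 0 ∧ z 3 = 0 ∧ z 0 = z 1 + z 4 := hz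
  rw [← hornForm_comp_add_right y j]
  change hornForm z = 0
  rw [hornForm_eq, Fin.sum_univ_five, h₂, h₃, h₀]
  ring

theorem horn_eq_zero_cases_of_le_of_le [LinearOrder R] [IsStrictOrderedRing R] {a b c d e : R}
    (ha : 0 ≤ a) (hb : 0 ≤ b) (hc : 0 ≤ c) (hd : 0 ≤ d) (he : 0 ≤ e) (hab : a ≤ b) (hae : a ≤ e)
    (h : (a + b + c + d + e) ^ 2 - 4 * (a * b + b * c + c * d + d * e + e * a) = 0) :
    (a = 0 ∧ e = 0 ∧ c = d + b) ∨ (a = 0 ∧ b = 0 ∧ d = e + c) := by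
  have sos₁ : (a - b + c - d + e) ^ 2 + 4 * (a * d) + 4 * (e * (b - a)) = 0 := by
    linear_combination h
  have sos₂ : (a + b - c + d - e) ^ 2 + 4 * (a * c) + 4 * (b * (e - a)) = 0 := by
    linear_combination h
  have h₁ : a - b + c - d + e = 0 := by
    nlinarith [sq_nonneg (a - b + c - d + e), mul_nonneg ha hd, mul_nonneg he (sub_nonneg.2 hab)]
  have h₂ : a + b - c + d - e = 0 := by
    nlinarith [sq_nonneg (a + b - c + d - e), mul_nonneg ha hc, mul_nonneg hb (sub_nonneg.2 hae)]
  have ha₀ : a = 0 := by linarith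
  subst ha₀
  have hbe : e * b = 0 := by nlinarith [mul_nonneg ha hd]
  rcases mul_eq_zero.mp hbe with he₀ | hb₀
  · exact .inl ⟨rfl, he₀, by linarith⟩
  · exact .inr ⟨rfl, hb₀, by linarith⟩

theorem hornForm_eq_zero_iff [LinearOrder R] [IsStrictOrderedRing R] {y : Fin 5 → R}
    (hy : 0 ≤ y) : hornForm y = 0 ↔ ∃ j, y ∈ hornZeroCone j := by
  refine ⟨fun h ↦ ?_, fun ⟨j, hj⟩ ↦ hornForm_eq_zero_of_mem_hornZeroCone hj⟩
  obtain ⟨j, hmin⟩ := Finite.exists_min y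
  set z : Fin 5 → R := fun i ↦ y (i + j)
  have hz : hornForm z = 0 := by rwa [hornForm_comp_add_right]
  have hz₀ (i : Fin 5) : z 0 ≤ z i := by simpa [z] using hmin (i + j)
  rw [hornForm_eq, Fin.sum_univ_five] at hz
  rcases horn_eq_zero_cases_of_le_of_le (hy _) (hy _) (hy _) (hy _) (hy _) (hz₀ 1) (hz₀ 4) hz with
    ⟨h₀, h₄, h₂⟩ | ⟨h₀, h₁, h₃⟩
  · exact ⟨2 + j, comp_add_right_mem_hornZeroCone_iff.1 ⟨h₄, h₀, h₂⟩⟩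
  · exact ⟨3 + j, comp_add_right_mem_hornZeroCone_iff.1
      ⟨by simpa using h₀, by simpa using h₁, by simpa using h₃⟩⟩

end Horn

theorem sq_eq_half_iff {t : ℝ} :
    t ^ 2 = 1 / 2 ↔ ∃ ε : ℝ, (ε = 1 ∨ ε = -1) ∧ t = ε / √2 := by
  have h : (1 / √2) ^ 2 = 1 / 2 := by rw [div_pow, one_pow, Real.sq_sqrt zero_le_two]
  rw [← h, sq_eq_sq_iff_eq_or_eq_neg]
  constructor
  · rintro (h | h)
    · exact ⟨1, .inl rfl, h⟩
    · exact ⟨-1, .inr rfl, by rw [h, neg_div]⟩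
  · rintro ⟨ε, rfl | rfl, rfl⟩
    · exact .inl rfl
    · exact .inr (neg_div _ _)

theorem sq_mem_hornZeroCone_iff {x : Fin 5 → ℝ} (hx : ∑ i, x i ^ 2 = 1) {j : Fin 5} :
    (fun i ↦ x i ^ 2) ∈ hornZeroCone j ↔ ∃ ε : ℝ, (ε = 1 ∨ ε = -1) ∧ x j = ε / √2 ∧
      x (j + 2) = 0 ∧ x (j + 3) = 0 ∧ x (j + 1) ^ 2 + x (j + 4) ^ 2 = 1 / 2 := by
  have hx' : x j ^ 2 + x (j + 1) ^ 2 + x (j + 2) ^ 2 + x (j + 3) ^ 2 + x (j + 4) ^ 2 = 1 := by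
    rw [← hx, ← Equiv.sum_comp (Equiv.addLeft j), Fin.sum_univ_five]
    simp only [Equiv.coe_addLeft, add_zero]
  simp only [hornZeroCone, Set.mem_ofPred_eq]
  constructor
  · rintro ⟨h₂, h₃, h₀⟩
    obtain ⟨ε, hε, hj⟩ := sq_eq_half_iff.1 (by linarith : x j ^ 2 = 1 / 2)
    exact ⟨ε, hε, hj, pow_eq_zero_iff two_ne_zero |>.1 h₂, pow_eq_zero_iff two_ne_zero |>.1 h₃,
      by linarith⟩
  · rintro ⟨ε, hε, hj, h₂, h₃, h₁₄⟩
    have hj2 := sq_eq_half_iff.2 ⟨ε, hε, hj⟩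
    exact ⟨by simp [h₂], by simp [h₃], by linarith⟩

/-- The zero set on the unit sphere `S⁴` of the Choi–Lam quartic
`H(x) = h(x₁²,…,x₅²)` is exactly the union of the ten circles. -/
theorem stmt4 (x : Fin 5 → ℝ) (hx : ∑ i, x i ^ 2 = 1) :
    ((∑ i, x i ^ 2) ^ 2
        - 4 * (x 0 ^ 2 * x 1 ^ 2 + x 1 ^ 2 * x 2 ^ 2 + x 2 ^ 2 * x 3 ^ 2
            + x 3 ^ 2 * x 4 ^ 2 + x 4 ^ 2 * x 0 ^ 2) = 0)
      ↔ inTenCircles x := by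
  have key := hornForm_eq_zero_iff (y := fun i ↦ x i ^ 2) fun i ↦ sq_nonneg (x i)
  simp only [hornForm_eq] at key
  exact key.trans (exists_congr fun j ↦ sq_mem_hornZeroCone_iff hx)
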